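/- Let U = Π σ T Π be a unitary operator on a finite-dimensional Hilbert space H_N (the range of an orthogonal projection Π), and suppose Egorov's one-step identity holds: U (Π M_F Π) U* = Π M_{F∘χ} Π + R with (1/d_N)||R||_HS^2 <= (K/N) ||F||_{C^2}^2 e^{2δ_0}, where the same bound holds with F replaced by F∘χ^ℓ and ||F∘χ^ℓ||_{C^2} <= c ||F||_{C^2} e^{|ℓ|δ_0}. Then for every T >= 1, U^T (Π M_F Π)(U*)^T = Π M_{F∘χ^T} Π + R^(T) with (1/d_N)||R^(T)||_HS^2 <= K' (T^2/N) ||F||_{C^2}^2 e^{2δ_0 T}. -/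

import Mathlib

open Matrix

/-- Hilbert–Schmidt norm squared. -/
noncomputable def hsNormSq {d : ℕ} (A : Matrix (Fin d) (Fin d) ℂ) : ℝ :=
  (Matrix.trace (Aᴴ * A)).re

/-!
The `T`-step remainder telescopes: with `R ℓ = U * B ℓ * Uᴴ - B (ℓ + 1)`,
`U ^ T * B 0 * Uᴴ ^ T - B T = ∑ j < T, U ^ (T - 1 - j) * R j * Uᴴ ^ (T - 1 - j)`.
Conjugation by the unitary `U ^ (T - 1 - j)` leaves the Hilbert–Schmidt norm of `R j` unchanged,
Cauchy–Schwarz gives `‖∑ j < T, X j‖² ≤ T * ∑ j < T, ‖X j‖²`, and every one-step bound is at most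
`(K / N) c² nF² e^{2 δ₀ T}`; the two factors of `T` give `T²`.
-/

lemma pow_mul_mul_pow_sub_eq_sum {R : Type*} [Ring R] (u v : R) (b : ℕ → R) (T : ℕ) :
    u ^ T * b 0 * v ^ T - b T
      = ∑ j ∈ Finset.range T, u ^ (T - 1 - j) * (u * b j * v - b (j + 1)) * v ^ (T - 1 - j) := by
  have step : ∀ j ∈ Finset.range T,
      u ^ (T - 1 - j) * (u * b j * v - b (j + 1)) * v ^ (T - 1 - j)
        = u ^ (T - j) * b j * v ^ (T - j) - u ^ (T - (j + 1)) * b (j + 1) * v ^ (T - (j + 1)) := by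
    intro j hj
    obtain ⟨k, rfl⟩ : ∃ k, T = j + 1 + k := ⟨T - (j + 1), by simp at hj; omega⟩
    rw [show j + 1 + k - 1 - j = k by omega, show j + 1 + k - j = k + 1 by omega,
      show j + 1 + k - (j + 1) = k by omega, pow_succ, pow_succ']
    noncomm_ring
  rw [Finset.sum_congr rfl step, Finset.sum_range_sub']
  simp

section HilbertSchmidt

variable {d : ℕ}

attribute [local instance] Matrix.frobeniusNormedAddCommGroup

lemma hsNormSq_eq_frobenius_norm_sq (A : Matrix (Fin d) (Fin d) ℂ) :
    hsNormSq A = ‖A‖ ^ 2 := by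
  rw [frobenius_norm_def, ← Real.rpow_natCast, ← Real.rpow_mul (by positivity)]
  norm_num [hsNormSq, trace, mul_apply, Complex.re_sum, Complex.sq_norm, Complex.normSq_apply]
  exact Finset.sum_comm

lemma hsNormSq_sum_le {ι : Type*} (s : Finset ι) (f : ι → Matrix (Fin d) (Fin d) ℂ) :
    hsNormSq (∑ i ∈ s, f i) ≤ s.card * ∑ i ∈ s, hsNormSq (f i) := by
  simp only [hsNormSq_eq_frobenius_norm_sq]
  calc ‖∑ i ∈ s, f i‖ ^ 2 ≤ (∑ i ∈ s, ‖f i‖) ^ 2 := by gcongr; exact norm_sum_le _ _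
    _ ≤ s.card * ∑ i ∈ s, ‖f i‖ ^ 2 := sq_sum_le_card_mul_sum_sq

lemma hsNormSq_unitary_conj {W : Matrix (Fin d) (Fin d) ℂ}
    (hW : W ∈ unitaryGroup (Fin d) ℂ) (A : Matrix (Fin d) (Fin d) ℂ) :
    hsNormSq (W * A * Wᴴ) = hsNormSq A := by
  have hWW : Wᴴ * W = 1 := Matrix.mem_unitaryGroup_iff'.mp hW
  have : (W * A * Wᴴ)ᴴ * (W * A * Wᴴ) = W * (Aᴴ * A) * Wᴴ := by
    simp only [conjTranspose_mul, conjTranspose_conjTranspose, Matrix.mul_assoc]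
    rw [← Matrix.mul_assoc Wᴴ W, hWW, Matrix.one_mul]
  rw [hsNormSq, hsNormSq, this, trace_mul_cycle, ← Matrix.mul_assoc, hWW, Matrix.one_mul]

lemma hsNormSq_conj_pow_sub_le {W : Matrix (Fin d) (Fin d) ℂ}
    (hW : W ∈ unitaryGroup (Fin d) ℂ) (B : ℕ → Matrix (Fin d) (Fin d) ℂ) (T : ℕ) :
    hsNormSq (W ^ T * B 0 * Wᴴ ^ T - B T)
      ≤ T * ∑ j ∈ Finset.range T, hsNormSq (W * B j * Wᴴ - B (j + 1)) := by
  rw [pow_mul_mul_pow_sub_eq_sum]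
  refine (hsNormSq_sum_le _ _).trans_eq ?_
  rw [Finset.card_range]
  congr 1
  refine Finset.sum_congr rfl fun j _ => ?_
  rw [← conjTranspose_pow]
  exact hsNormSq_unitary_conj (pow_mem hW _) _

end HilbertSchmidt

theorem stmt_17_general (d N : ℕ)
    (U : Matrix.unitaryGroup (Fin d) ℂ)
    (B : ℕ → Matrix (Fin d) (Fin d) ℂ)
    (K c δ₀ nF : ℝ) (hK : 0 < K) (hc : 0 < c) (hδ₀ : 0 < δ₀)
    (hstep : ∀ ℓ : ℕ,
      hsNormSq ((U : Matrix (Fin d) (Fin d) ℂ) * B ℓ * (U : Matrix (Fin d) (Fin d) ℂ)ᴴ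
          - B (ℓ + 1)) / d
        ≤ (K / N) * (c * nF * Real.exp (ℓ * δ₀)) ^ 2 * Real.exp (2 * δ₀)) :
    ∃ K' : ℝ, 0 < K' ∧ ∀ T : ℕ, 1 ≤ T →
      hsNormSq ((U : Matrix (Fin d) (Fin d) ℂ) ^ T * B 0
          * ((U : Matrix (Fin d) (Fin d) ℂ)ᴴ) ^ T - B T) / d
        ≤ K' * ((T : ℝ) ^ 2 / N) * nF ^ 2 * Real.exp (2 * δ₀ * T) := by
  refine ⟨K * c ^ 2, by positivity, fun T _ => ?_⟩
  set V : Matrix (Fin d) (Fin d) ℂ := (U : Matrix (Fin d) (Fin d) ℂ)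
  have hterm : ∀ j ∈ Finset.range T, hsNormSq (V * B j * Vᴴ - B (j + 1)) / d
      ≤ K / N * c ^ 2 * nF ^ 2 * Real.exp (2 * δ₀ * T) := by
    intro j hj
    have hjT : (j : ℝ) + 1 ≤ T := by exact_mod_cast Finset.mem_range.mp hj
    have hexp : Real.exp (j * δ₀) ^ 2 * Real.exp (2 * δ₀) = Real.exp (2 * δ₀ * (j + 1)) := by
      rw [← Real.exp_nat_mul, ← Real.exp_add]
      ring_nf
    calc _ ≤ _ := hstep j
      _ = K / N * c ^ 2 * nF ^ 2 * Real.exp (2 * δ₀ * (j + 1)) := by rw [← hexp]; ring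
      _ ≤ _ := by gcongr
  calc hsNormSq (V ^ T * B 0 * Vᴴ ^ T - B T) / d
      ≤ T * ∑ j ∈ Finset.range T, hsNormSq (V * B j * Vᴴ - B (j + 1)) / d := by
        rw [← Finset.sum_div, ← mul_div_assoc]
        gcongr
        exact hsNormSq_conj_pow_sub_le U.2 B T
    _ ≤ T * ∑ _j ∈ Finset.range T, K / N * c ^ 2 * nF ^ 2 * Real.exp (2 * δ₀ * T) := by
        gcongr with j hj
        exact hterm j hj
    _ = _ := by
        rw [Finset.sum_const, Finset.card_range, nsmul_eq_mul]
        ring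

/-- Iterated Egorov theorem: if the one-step Egorov identity
`U (Π M_{F∘χ^ℓ} Π) U* = Π M_{F∘χ^{ℓ+1}} Π + R_ℓ` holds with
`(1/d_N)‖R_ℓ‖²_HS ≤ (K/N) ‖F∘χ^ℓ‖²_{C²} e^{2δ₀}` and `‖F∘χ^ℓ‖_{C²} ≤ c‖F‖_{C²} e^{|ℓ|δ₀}`,
then for every `T ≥ 1`,
`U^T (Π M_F Π)(U*)^T = Π M_{F∘χ^T} Π + R^(T)` with
`(1/d_N)‖R^(T)‖²_HS ≤ K' (T²/N)‖F‖²_{C²} e^{2δ₀T}`. Here `B ℓ` stands for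
`Π M_{F∘χ^ℓ} Π`. -/
theorem stmt_17 (d N : ℕ) (hd : 1 ≤ d) (hN : 1 ≤ N)
    (U : Matrix.unitaryGroup (Fin d) ℂ)
    (B : ℕ → Matrix (Fin d) (Fin d) ℂ)
    (K c δ₀ nF : ℝ) (hK : 0 < K) (hc : 0 < c) (hδ₀ : 0 < δ₀) (hnF : 0 ≤ nF)
    (hstep : ∀ ℓ : ℕ,
      hsNormSq ((U : Matrix (Fin d) (Fin d) ℂ) * B ℓ * (U : Matrix (Fin d) (Fin d) ℂ)ᴴ
          - B (ℓ + 1)) / d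
        ≤ (K / N) * (c * nF * Real.exp (ℓ * δ₀)) ^ 2 * Real.exp (2 * δ₀)) :
    ∃ K' : ℝ, 0 < K' ∧ ∀ T : ℕ, 1 ≤ T →
      hsNormSq ((U : Matrix (Fin d) (Fin d) ℂ) ^ T * B 0
          * ((U : Matrix (Fin d) (Fin d) ℂ)ᴴ) ^ T - B T) / d
        ≤ K' * ((T : ℝ) ^ 2 / N) * nF ^ 2 * Real.exp (2 * δ₀ * T) :=
  stmt_17_general d N U B K c δ₀ nF hK hc hδ₀ hstep
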